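/- arXiv:math/0303007 — 6 statements merged into one kernel-verified Lean document; each statement's English description precedes it below -/
import Mathlib

section
/- Let n ≥ 1 be an integer and suppose that T_{ab}^n(0,1) has first coordinate 0, or that T_{ab}^n(0,−1) has first coordinate 0. Then there is a nonzero real number λ such that T_{ab}^n(0,1) = (0, λ) or T_{ab}^n(0,−1) = (0, −λ⁻¹). Moreover: (i) if λ > 0, then both relations T_{ab}^n(0,1) = (0, λ) and T_{ab}^n(0,−1) = (0, −λ⁻¹) hold, one also has T_{ab}^n(−1,0) = (−λ, 0) and T_{ab}^n(1,0) = (λ⁻¹, 0), and T_{ab} has a periodic ray; (ii) if λ < 0, then necessarily λ = −1, and in the case T_{ab}^n(0,1) = (0,−1) one also has T_{ab}^n(−1,0) = (1,0), while in the case T_{ab}^n(0,−1) = (0,1) one also has T_{ab}^n(1,0) = (−1,0). -/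
open Filter Set MeasureTheory

/-- The piecewise slope function: `Fab a b x = a` if `x ≥ 0`, `b` if `x < 0`. -/
noncomputable def Fab (a b x : ℝ) : ℝ := if 0 ≤ x then a else b

/-- The piecewise-linear area-preserving map `T_{ab}(x,y) = (F_{ab}(x)·x − y, x)`,
packaged as a permutation of `ℝ²` (with its explicit inverse). -/
noncomputable def Tab (a b : ℝ) : Equiv.Perm (ℝ × ℝ) where
  toFun p := (Fab a b p.1 * p.1 - p.2, p.1)
  invFun p := (p.2, Fab a b p.2 * p.2 - p.1)
  left_inv p := by simp
  right_inv p := by simp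

/-- A nonzero vector `v` is a periodic ray of `T_{ab}` if `T_{ab}^n v = λ • v`
for some `n ≥ 1` and some `λ > 0`. -/
def IsPeriodicRay (a b : ℝ) (v : ℝ × ℝ) : Prop :=
  v ≠ 0 ∧ ∃ n : ℕ, 1 ≤ n ∧ ∃ l : ℝ, 0 < l ∧ ((Tab a b) ^ n) v = l • v

/-!
`T_{ab}` is positively homogeneous and reversible: with `R(x, y) = (y, x)` one has
`R ∘ T ∘ R = T⁻¹`, so `T^n(0, c) = (0, s)` forces `T^n(s, 0) = (c, 0)`, while `T(0, c) = (-c, 0)`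
gives `T^n(-c, 0) = (-s, 0)`. If `s` and `c` have opposite signs, `(s, 0)` is a positive multiple
of `(-c, 0)`, and homogeneity turns the two relations into `s² = c²`, i.e. `s = -c`. If they have
the same sign, `(c, 0)` is a positive multiple of `(s, 0)`, which yields `T^n(c, 0)` and then
`T^n(0, -c)`; for `c = 1` and `s > 0` the ray through `(0, 1)` is periodic.
-/

lemma Equiv.Perm.pow_apply_apply {α : Type*} (f : Equiv.Perm α) (n : ℕ) (x : α) :
    (f ^ n) (f x) = f ((f ^ n) x) := by
  rw [← Equiv.Perm.mul_apply, ← pow_succ, pow_succ', Equiv.Perm.mul_apply]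

lemma Fab_mul_of_pos {a b t : ℝ} (ht : 0 < t) (x : ℝ) : Fab a b (t * x) = Fab a b x := by
  simp only [Fab, mul_nonneg_iff_of_pos_left ht]

namespace Tab

variable (a b : ℝ)

lemma apply_zero_left (c : ℝ) : Tab a b (0, c) = (-c, 0) := by
  simp [Tab, Fab]

lemma symm_apply_zero_right (u : ℝ) : (Tab a b).symm (u, 0) = (0, -u) := by
  simp [Tab, Fab]

lemma apply_smul {t : ℝ} (ht : 0 ≤ t) (p : ℝ × ℝ) : Tab a b (t • p) = t • Tab a b p := by
  rcases ht.eq_or_lt with rfl | ht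
  · simp [Tab]
  · simp only [Tab, Equiv.coe_fn_mk, Prod.smul_fst, Prod.smul_snd, smul_eq_mul,
      Fab_mul_of_pos ht, Prod.smul_mk]
    ext <;> ring

lemma pow_apply_smul {t : ℝ} (ht : 0 ≤ t) (n : ℕ) (p : ℝ × ℝ) :
    (Tab a b ^ n) (t • p) = t • (Tab a b ^ n) p := by
  induction n with
  | zero => rfl
  | succ n ih => rw [pow_succ', Equiv.Perm.mul_apply, Equiv.Perm.mul_apply, ih, apply_smul a b ht]

lemma pow_apply_zero (n : ℕ) : (Tab a b ^ n) 0 = 0 := by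
  simpa using pow_apply_smul a b le_rfl n (0 : ℝ × ℝ)

lemma apply_swap_apply (q : ℝ × ℝ) : Tab a b (Tab a b q).swap = q.swap := by
  simp [Tab, Prod.swap]

lemma pow_apply_swap_pow_apply (n : ℕ) (p : ℝ × ℝ) :
    (Tab a b ^ n) ((Tab a b ^ n) p).swap = p.swap := by
  induction n generalizing p with
  | zero => rfl
  | succ n ih =>
    rw [pow_succ, Equiv.Perm.mul_apply, Equiv.Perm.mul_apply, Equiv.Perm.pow_apply_apply _ n p,
      apply_swap_apply, ih]

lemma pow_apply_neg_zero (n : ℕ) (c : ℝ) :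
    (Tab a b ^ n) (-c, 0) = Tab a b ((Tab a b ^ n) (0, c)) := by
  rw [← apply_zero_left a b, Equiv.Perm.pow_apply_apply]

section OnYAxis

variable {a b} {n : ℕ} {c s : ℝ}

lemma pow_apply_neg_zero_of_eq (hs : (Tab a b ^ n) (0, c) = (0, s)) :
    (Tab a b ^ n) (-c, 0) = (-s, 0) := by
  rw [pow_apply_neg_zero, hs, apply_zero_left]

lemma pow_apply_mk_zero_of_eq (hs : (Tab a b ^ n) (0, c) = (0, s)) :
    (Tab a b ^ n) (s, 0) = (c, 0) := by
  simpa [hs] using pow_apply_swap_pow_apply a b n (0, c)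

lemma ne_zero_of_pow_apply_eq (hs : (Tab a b ^ n) (0, c) = (0, s)) (hc : c ≠ 0) : s ≠ 0 := by
  rintro rfl
  have := pow_apply_mk_zero_of_eq hs
  rw [Prod.mk_zero_zero, pow_apply_zero] at this
  exact hc (congrArg Prod.fst this).symm

lemma eq_neg_of_pow_apply_eq (hs : (Tab a b ^ n) (0, c) = (0, s)) (hsc : s * c < 0) : s = -c := by
  have hc : c ≠ 0 := by rintro rfl; simp at hsc
  have hk : 0 ≤ -s / c := neg_div c s ▸ neg_nonneg.2 (div_neg_iff.2 (mul_neg_iff.1 hsc)).le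
  have hsk : (-s / c) • ((-c, 0) : ℝ × ℝ) = (s, 0) := by
    ext <;> simp [field]
  have key := pow_apply_smul a b hk n (-c, 0)
  rw [hsk, pow_apply_mk_zero_of_eq hs, pow_apply_neg_zero_of_eq hs] at key
  have hsq : (s + c) * (s - c) = 0 := by
    have := congrArg Prod.fst key
    simp only [Prod.smul_mk, smul_eq_mul] at this
    field_simp at this
    linear_combination -this
  rcases mul_eq_zero.1 hsq with h | h
  · linarith
  · nlinarith

lemma pow_apply_of_pow_apply_eq (hs : (Tab a b ^ n) (0, c) = (0, s)) (hsc : 0 < s * c) :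
    (Tab a b ^ n) (c, 0) = (c ^ 2 / s, 0) ∧ (Tab a b ^ n) (0, -c) = (0, -(c ^ 2 / s)) := by
  have hs0 : s ≠ 0 := by rintro rfl; simp at hsc
  have hk : 0 ≤ c / s :=
    (div_pos_iff.2 ((pos_and_pos_or_neg_and_neg_of_mul_pos hsc).imp And.symm And.symm)).le
  have hck : (c / s) • ((s, 0) : ℝ × ℝ) = (c, 0) := by
    ext <;> simp [field]
  have hc0 : (Tab a b ^ n) (c, 0) = (c ^ 2 / s, 0) := by
    rw [← hck, pow_apply_smul a b hk, pow_apply_mk_zero_of_eq hs]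
    ext <;> simp [field]
  refine ⟨hc0, (Tab a b).eq_symm_apply.2 ?_ |>.trans (symm_apply_zero_right a b _)⟩
  rw [← pow_apply_neg_zero, neg_neg, hc0]

end OnYAxis

lemma pow_apply_zero_one_trichotomy (n : ℕ)
    (h : ((Tab a b ^ n) (0, 1)).1 = 0 ∨ ((Tab a b ^ n) (0, -1)).1 = 0) :
    (∃ s, 0 < s ∧ (Tab a b ^ n) (0, 1) = (0, s)) ∨
      (Tab a b ^ n) (0, 1) = (0, -1) ∨ (Tab a b ^ n) (0, -1) = (0, 1) := by
  rcases h with h | h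
  · obtain ⟨s, hs⟩ : ∃ s, (Tab a b ^ n) (0, 1) = (0, s) := ⟨_, Prod.ext h rfl⟩
    rcases (ne_zero_of_pow_apply_eq hs one_ne_zero).lt_or_gt with hneg | hpos
    · exact .inr (.inl (by rw [hs, eq_neg_of_pow_apply_eq hs (by simpa)]))
    · exact .inl ⟨s, hpos, hs⟩
  · obtain ⟨t, ht⟩ : ∃ t, (Tab a b ^ n) (0, -1) = (0, t) := ⟨_, Prod.ext h rfl⟩
    rcases (ne_zero_of_pow_apply_eq ht (by norm_num)).lt_or_gt with hneg | hpos
    · refine .inl ⟨-t⁻¹, neg_pos.2 (inv_lt_zero.2 hneg), ?_⟩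
      simpa using (pow_apply_of_pow_apply_eq ht (by linarith)).2
    · exact .inr (.inr (by rw [ht, eq_neg_of_pow_apply_eq ht (by linarith), neg_neg]))

end Tab

/-- if `T_{ab}^n(0,1)` or `T_{ab}^n(0,−1)` lands on the `y`-axis, then the
dichotomy of Theorem 3.4 of part I holds. -/
theorem Tab_y_axis_dichotomy (a b : ℝ) (n : ℕ) (hn : 1 ≤ n)
    (h : (((Tab a b) ^ n) ((0:ℝ), (1:ℝ))).1 = 0 ∨ (((Tab a b) ^ n) ((0:ℝ), (-1:ℝ))).1 = 0) :
    ∃ l : ℝ, l ≠ 0 ∧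
      (((Tab a b) ^ n) ((0:ℝ), (1:ℝ)) = ((0:ℝ), l) ∨
        ((Tab a b) ^ n) ((0:ℝ), (-1:ℝ)) = ((0:ℝ), -l⁻¹)) ∧
      (0 < l →
        ((Tab a b) ^ n) ((0:ℝ), (1:ℝ)) = ((0:ℝ), l) ∧
        ((Tab a b) ^ n) ((0:ℝ), (-1:ℝ)) = ((0:ℝ), -l⁻¹) ∧
        ((Tab a b) ^ n) ((-1:ℝ), (0:ℝ)) = ((-l : ℝ), (0:ℝ)) ∧
        ((Tab a b) ^ n) ((1:ℝ), (0:ℝ)) = ((l⁻¹ : ℝ), (0:ℝ)) ∧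
        (∃ v, IsPeriodicRay a b v)) ∧
      (l < 0 → l = -1 ∧
        (((Tab a b) ^ n) ((0:ℝ), (1:ℝ)) = ((0:ℝ), (-1:ℝ)) →
          ((Tab a b) ^ n) ((-1:ℝ), (0:ℝ)) = ((1:ℝ), (0:ℝ))) ∧
        (((Tab a b) ^ n) ((0:ℝ), (-1:ℝ)) = ((0:ℝ), (1:ℝ)) →
          ((Tab a b) ^ n) ((1:ℝ), (0:ℝ)) = ((-1:ℝ), (0:ℝ)))) := by
  have h_neg_one : (Tab a b ^ n) (0, 1) = (0, -1) → (Tab a b ^ n) (-1, 0) = (1, 0) :=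
    fun hs => by simpa using Tab.pow_apply_neg_zero_of_eq hs
  have h_one : (Tab a b ^ n) (0, -1) = (0, 1) → (Tab a b ^ n) (1, 0) = (-1, 0) :=
    fun hs => by simpa using Tab.pow_apply_neg_zero_of_eq hs
  rcases Tab.pow_apply_zero_one_trichotomy a b n h with ⟨s, hs0, hs⟩ | hs | hs
  · obtain ⟨h_one_zero, h_zero_neg_one⟩ := Tab.pow_apply_of_pow_apply_eq hs (by simpa)
    refine ⟨s, hs0.ne', .inl hs, fun _ => ⟨hs, by simpa using h_zero_neg_one,
      Tab.pow_apply_neg_zero_of_eq hs, by simpa using h_one_zero,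
      (0, 1), by simp, n, hn, s, hs0, by simp [hs]⟩, fun h => absurd h hs0.not_gt⟩
  · exact ⟨-1, by norm_num, .inl hs, fun h => by norm_num at h, fun _ => ⟨rfl, h_neg_one, h_one⟩⟩
  · exact ⟨-1, by norm_num, .inr (by simpa using hs), fun h => by norm_num at h,
      fun _ => ⟨rfl, h_neg_one, h_one⟩⟩
end

section
/- Let M = [[a, b], [c, d]] be a real 2×2 matrix with determinant 1 and M ≠ ±I. Define the quadratic form Q(x, y) = c·x² + (d − a)·x·y − b·y². Then: (1) Q(M·v) = Q(v) for all v ∈ ℝ²; (2) any quadratic form Q'(x, y) = A·x² + 2B·x·y + C·y² satisfying Q'(M·v) = Q'(v) for all v is a real scalar multiple of Q; (3) the discriminant of Q satisfies (d − a)² + 4bc = (a + d)² − 4, so Q is definite, degenerate, or indefinite according as |a + d| < 2, |a + d| = 2, or |a + d| > 2; and (4) every real 2×2 matrix M' with determinant 1 that commutes with M also satisfies Q(M'·v) = Q(v) for all v. -/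
/-- Action of a real 2×2 matrix on the plane `ℝ × ℝ`. -/
noncomputable def matAct (M : Matrix (Fin 2) (Fin 2) ℝ) (w : ℝ × ℝ) : ℝ × ℝ :=
  (M 0 0 * w.1 + M 0 1 * w.2, M 1 0 * w.1 + M 1 1 * w.2)

/-- an `SL(2,ℝ)` matrix `M = [[a,b],[c,d]] ≠ ±I` preserves the quadratic form
`Q(x,y) = c·x² + (d−a)·x·y − b·y²`, the only invariant quadratic forms are its scalar
multiples, the discriminant identity `(d−a)² + 4bc = (a+d)² − 4` holds (giving the
definite/degenerate/indefinite classification by `|a+d|` vs `2`), and any commuting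
`SL(2,ℝ)` matrix also preserves `Q`. -/
theorem sl2_invariant_quadratic_form (M : Matrix (Fin 2) (Fin 2) ℝ)
    (hdet : M.det = 1) (h1 : M ≠ 1) (h2 : M ≠ -1) :
    (∀ v : ℝ × ℝ,
      M 1 0 * (matAct M v).1 ^ 2 + (M 1 1 - M 0 0) * (matAct M v).1 * (matAct M v).2
          - M 0 1 * (matAct M v).2 ^ 2
        = M 1 0 * v.1 ^ 2 + (M 1 1 - M 0 0) * v.1 * v.2 - M 0 1 * v.2 ^ 2) ∧
    (∀ A B C : ℝ,
      (∀ v : ℝ × ℝ,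
        A * (matAct M v).1 ^ 2 + 2 * B * (matAct M v).1 * (matAct M v).2
            + C * (matAct M v).2 ^ 2
          = A * v.1 ^ 2 + 2 * B * v.1 * v.2 + C * v.2 ^ 2) →
      ∃ t : ℝ, A = t * M 1 0 ∧ 2 * B = t * (M 1 1 - M 0 0) ∧ C = -(t * M 0 1)) ∧
    ((M 1 1 - M 0 0) ^ 2 + 4 * M 0 1 * M 1 0 = (M 0 0 + M 1 1) ^ 2 - 4) ∧
    (|M 0 0 + M 1 1| < 2 ↔ (M 1 1 - M 0 0) ^ 2 + 4 * M 0 1 * M 1 0 < 0) ∧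
    (|M 0 0 + M 1 1| = 2 ↔ (M 1 1 - M 0 0) ^ 2 + 4 * M 0 1 * M 1 0 = 0) ∧
    (2 < |M 0 0 + M 1 1| ↔ 0 < (M 1 1 - M 0 0) ^ 2 + 4 * M 0 1 * M 1 0) ∧
    (∀ M' : Matrix (Fin 2) (Fin 2) ℝ, M'.det = 1 → M * M' = M' * M →
      ∀ v : ℝ × ℝ,
        M 1 0 * (matAct M' v).1 ^ 2 + (M 1 1 - M 0 0) * (matAct M' v).1 * (matAct M' v).2
            - M 0 1 * (matAct M' v).2 ^ 2
          = M 1 0 * v.1 ^ 2 + (M 1 1 - M 0 0) * v.1 * v.2 - M 0 1 * v.2 ^ 2) := by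
  rw [Matrix.det_fin_two] at hdet
  set a := M 0 0 with ha
  set b := M 0 1 with hb
  set c := M 1 0 with hc
  set d := M 1 1 with hd
  have key : (d - a) ^ 2 + 4 * b * c = (a + d) ^ 2 - 4 := by linear_combination (-4) * hdet
  have hns : b ≠ 0 ∨ c ≠ 0 ∨ d - a ≠ 0 := by
    by_contra h
    push_neg at h
    obtain ⟨hb0, hc0, hda⟩ := h
    have ha2 : a * a = 1 := by linear_combination hdet - a * hda + c * hb0
    have : a = 1 ∨ a = -1 := by
      rcases mul_self_eq_one_iff.mp ha2 with h | h
      · exact Or.inl h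
      · exact Or.inr h
    rcases this with h | h
    · apply h1
      ext i j
      fin_cases i <;> fin_cases j <;>
        simp [Matrix.one_apply, ← ha, ← hb, ← hc, ← hd, h, hb0, hc0, hda, h]
        <;> linarith [hda]
    · apply h2
      ext i j
      fin_cases i <;> fin_cases j <;>
        simp [Matrix.one_apply, ← ha, ← hb, ← hc, ← hd, h, hb0, hc0, hda, h]
        <;> linarith [hda]
  refine ⟨?_, ?_, key, ?_, ?_, ?_, ?_⟩
  · rintro ⟨x, y⟩
    simp only [matAct]
    linear_combination (c * x ^ 2 + (d - a) * x * y - b * y ^ 2) * hdet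
  · intro A B C hQ
    have e1 := hQ (1, 0)
    have e2 := hQ (0, 1)
    have e3 := hQ (1, 1)
    simp only [matAct] at e1 e2 e3
    norm_num at e1 e2 e3
    simp only [← ha, ← hb, ← hc, ← hd] at e1 e2 e3
    have e4 : A * a * b + B * (a * d + b * c) + C * c * d = B := by
      linear_combination (1/2) * e3 - (1/2) * e1 - (1/2) * e2
    have E1 : A * (d - a) = 2 * B * c := by
      linear_combination (-d) * e1 + c * e4 + (A * a + B * c) * hdet
    have E2 : C * c = -(A * b) := by
      linear_combination d * e4 - c * e2 - (A * b + B * d) * hdet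
    have E3 : 2 * B * b = (a - d) * C := by
      linear_combination (-b) * e4 + a * e2 - (B * b + C * d) * hdet
    rcases eq_or_ne c 0 with hc0 | hc0
    · rcases eq_or_ne (d - a) 0 with hda0 | hda0
      · rcases hns with hb0 | hc0' | hda0'
        · have hA : A = 0 := by
            have h0 : A * b = 0 := by linear_combination E2 - C * hc0
            exact (mul_eq_zero.mp h0).resolve_right hb0
          have hB : B = 0 := by
            have h0 : 2 * B * b = 0 := by linear_combination E3 - C * hda0
            have := (mul_eq_zero.mp h0).resolve_right hb0
            linarith
          refine ⟨-C / b, ?_, ?_, ?_⟩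
          · rw [hc0, mul_zero, hA]
          · rw [hda0, mul_zero, hB]; ring
          · field_simp
        · exact absurd hc0 hc0'
        · exact absurd hda0 hda0'
      · have hA : A = 0 := by
          have h0 : A * (d - a) = 0 := by rw [E1, hc0]; ring
          exact (mul_eq_zero.mp h0).resolve_right hda0
        have hC : C * (d - a) = -(2 * B * b) := by linear_combination E3
        refine ⟨2 * B / (d - a), ?_, ?_, ?_⟩
        · rw [hc0, mul_zero, hA]
        · field_simp
        · field_simp; linear_combination hC
    · refine ⟨A / c, ?_, ?_, ?_⟩
      · field_simp
      · field_simp; linear_combination -E1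
      · field_simp; linear_combination E2
  · rw [key]
    constructor <;> intro h <;> nlinarith [sq_abs (a + d), abs_nonneg (a + d)]
  · rw [key, abs_eq (by norm_num : (0:ℝ) ≤ 2)]
    constructor
    · rintro (h | h) <;> rw [h] <;> norm_num
    · intro h
      have h' : (a + d - 2) * (a + d + 2) = 0 := by linear_combination h
      rcases mul_eq_zero.mp h' with h'' | h''
      · left; linarith
      · right; linarith
  · rw [key]
    constructor <;> intro h <;> nlinarith [sq_abs (a + d), abs_nonneg (a + d)]
  · intro M' hdet' hcomm
    rintro ⟨x, y⟩
    rw [Matrix.det_fin_two] at hdet'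
    have r1 := congrFun (congrFun hcomm 0) 0
    have r2 := congrFun (congrFun hcomm 0) 1
    have r3 := congrFun (congrFun hcomm 1) 0
    simp only [Matrix.mul_apply, Fin.sum_univ_two, ← ha, ← hb, ← hc, ← hd] at r1 r2 r3
    simp only [matAct]
    set a' := M' 0 0
    set b' := M' 0 1
    set c' := M' 1 0
    set d' := M' 1 1
    linear_combination (-(c' * x ^ 2 + 2 * a' * x * y + b' * y ^ 2)) * r1
      + (-(2 * c' * x * y + d' * y ^ 2)) * r2
      + (a' * x ^ 2) * r3
      + (c * x ^ 2 + (d - a) * x * y - b * y ^ 2) * hdet'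
end

section
/- For every real a with 1 < a < √2, setting b = 2(a² − 1)/(a(a² − 2)) (note a(a² − 2) ≠ 0 in this range), one has T_{ab}^8(0, −1) = (0, 1). -/
open Filter Set MeasureTheory

/-! `T_{ab}` is reversible: conjugating it by the swap `σ(x, y) = (y, x)` inverts it. Hence an
orbit that reaches a point `q = Tⁿ p` with `T q = σ q` retraces itself mirrored, and
`T^{2n+1} p = σ p`. The value of `b` is exactly the one for which `q = (a(a² − 2), a² − 1)`,
reached from `(1, 0)` in three steps, satisfies `T q = σ q`; and `T (0, −1) = (1, 0)`. -/

theorem Equiv.Perm.pow_two_mul_add_one_apply_of_reversible {α : Type*} {f σ : Equiv.Perm α}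
    (hrev : SemiconjBy σ f⁻¹ f) {p : α} {n : ℕ}
    (hq : f ((f ^ n) p) = σ ((f ^ n) p)) :
    (f ^ (2 * n + 1)) p = σ p := by
  have hconj : ∀ x, (f ^ n) (σ x) = σ ((f⁻¹ ^ n) x) := fun x =>
    (DFunLike.congr_fun (hrev.pow_right n).eq x).symm
  calc (f ^ (2 * n + 1)) p = (f ^ n) (f ((f ^ n) p)) := by
        rw [two_mul, add_assoc, pow_add, Equiv.Perm.mul_apply, pow_succ', Equiv.Perm.mul_apply]
    _ = σ p := by
        rw [hq, hconj, inv_pow]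
        exact congrArg σ ((f ^ n).symm_apply_apply p)

theorem semiconjBy_prodComm_Tab_inv_Tab (a b : ℝ) :
    SemiconjBy (Equiv.prodComm ℝ ℝ) (Tab a b)⁻¹ (Tab a b) := by
  ext p <;> rfl

section Tab

variable {a b : ℝ}

theorem Tab_apply_of_nonneg {x : ℝ} (hx : 0 ≤ x) (y : ℝ) : Tab a b (x, y) = (a * x - y, x) := by
  simp [Tab, Fab, hx]

theorem Tab_apply_of_neg {x : ℝ} (hx : x < 0) (y : ℝ) : Tab a b (x, y) = (b * x - y, x) := by
  simp [Tab, Fab, hx.not_ge]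

theorem Tab_pow_two_mul_add_one_apply {p : ℝ × ℝ} {n : ℕ}
    (hq : Tab a b ((Tab a b ^ n) p) = ((Tab a b ^ n) p).swap) :
    (Tab a b ^ (2 * n + 1)) p = p.swap :=
  Equiv.Perm.pow_two_mul_add_one_apply_of_reversible (σ := Equiv.prodComm ℝ ℝ)
    (semiconjBy_prodComm_Tab_inv_Tab a b) hq

end Tab

/-- for `1 < a < √2` and `b = 2(a² − 1)/(a(a² − 2))`, one has
`T_{ab}⁸(0,−1) = (0,1)`. -/
theorem example51_orbit (a : ℝ) (ha1 : 1 < a) (ha2 : a < Real.sqrt 2)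
    (b : ℝ) (hb : b = 2 * (a ^ 2 - 1) / (a * (a ^ 2 - 2))) :
    a * (a ^ 2 - 2) ≠ 0 ∧
    ((Tab a b) ^ (8 : ℕ)) ((0:ℝ), (-1:ℝ)) = ((0:ℝ), (1:ℝ)) := by
  have ha0 : 0 < a := one_pos.trans ha1
  have hsq_lt : a ^ 2 < 2 := by
    simpa [Real.sq_sqrt] using pow_lt_pow_left₀ ha2 ha0.le two_ne_zero
  have hsq_gt_one : 0 < a ^ 2 - 1 := by nlinarith
  have hneg : a * (a ^ 2 - 2) < 0 := mul_neg_of_pos_of_neg ha0 (by linarith)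
  refine ⟨hneg.ne, ?_⟩
  have hb' : b * (a * (a ^ 2 - 2)) = 2 * (a ^ 2 - 1) := by
    rw [hb, div_mul_cancel₀ _ hneg.ne]
  have hthree : (Tab a b ^ 3) (1, 0) = (a * (a ^ 2 - 2), a ^ 2 - 1) := by
    simp only [pow_succ', pow_zero, mul_one, Equiv.Perm.mul_apply]
    rw [Tab_apply_of_nonneg zero_le_one, mul_one, sub_zero, Tab_apply_of_nonneg ha0.le,
      Tab_apply_of_nonneg (by nlinarith)]
    ext <;> ring
  have hmirror : Tab a b ((Tab a b ^ 3) (1, 0)) = ((Tab a b ^ 3) (1, 0)).swap := by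
    rw [hthree, Tab_apply_of_neg hneg, hb', Prod.swap_prod_mk]
    ext <;> ring
  calc (Tab a b ^ 8) (0, -1) = (Tab a b ^ (2 * 3 + 1)) (Tab a b (0, -1)) := by
        rw [pow_succ, Equiv.Perm.mul_apply]
    _ = (0, 1) := by
        rw [Tab_apply_of_nonneg le_rfl, mul_zero, zero_sub, neg_neg]
        exact Tab_pow_two_mul_add_one_apply hmirror
end

section
/- The polynomial z⁸ + 4z⁶ + 4z⁴ + 4z² + 1 is irreducible over ℚ, and none of its complex roots is a root of unity. Consequently, if θ ∈ (0, π) satisfies 2·cos θ = 2^{1/4}, then θ/π is irrational. -/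
open Polynomial

/-!
For the octic `P`, `P(X + 1) ≡ X⁸ mod 2` and `P(1) = 14`, so `P(X + 1)` is Eisenstein at 2 and `P`
is irreducible. All complex roots of an irreducible rational polynomial share the same minimal
polynomial, so if one of them were a root of unity, all of them would be. But `P` has the root
`a·i` with `a > 1` real, which lies off the unit circle. Finally, if `2 cos θ = 2^{1/4}` then
`z = e^{iθ}` satisfies `(z + z⁻¹)⁴ = 2`, i.e. `P(z) = 0`, while `θ = (p/q)π` would make `z` a
`2q`-th root of unity.
-/

theorem irreducible_X_pow_add_C_mul {R : Type*} [CommRing R] [IsDomain R] {p : R}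
    (hp : Prime p) {n : ℕ} {g : R[X]} (hg : g.degree < n) (hg0 : ¬ p ∣ g.coeff 0) :
    Irreducible (X ^ n + C p * g) := by
  have hn : n ≠ 0 := by
    rintro rfl
    rw [degree_lt_iff_coeff_zero] at hg
    exact hg0 (by simp [hg 0 le_rfl])
  have hdeg : (C p * g).degree < n := (degree_C_mul hp.ne_zero).symm ▸ hg
  have hmonic : (X ^ n + C p * g).Monic := monic_X_pow_add hdeg
  have hdegf : (X ^ n + C p * g).degree = (n : WithBot ℕ) := by
    rw [degree_add_eq_left_of_degree_lt (by rwa [degree_X_pow]), degree_X_pow]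
  refine irreducible_of_eisenstein_criterion
    ((Ideal.span_singleton_prime hp.ne_zero).mpr hp) ?_ ?_ ?_ ?_ hmonic.isPrimitive
  · rw [hmonic.leadingCoeff, Ideal.mem_span_singleton]
    exact hp.not_dvd_one
  · intro m hm
    rw [hdegf, Nat.cast_lt] at hm
    simp [coeff_X_pow, hm.ne, Ideal.mem_span_singleton]
  · rw [hdegf]; exact_mod_cast Nat.pos_of_ne_zero hn
  · rw [Ideal.span_singleton_pow, Ideal.mem_span_singleton, sq]
    simpa [coeff_X_pow, hn.symm, mul_dvd_mul_iff_left hp.ne_zero] using hg0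

noncomputable def octic : ℚ[X] := X ^ 8 + C 4 * X ^ 6 + C 4 * X ^ 4 + C 4 * X ^ 2 + 1

theorem aeval_octic {A : Type*} [CommRing A] [Algebra ℚ A] (z : A) :
    aeval z octic = z ^ 8 + 4 * z ^ 6 + 4 * z ^ 4 + 4 * z ^ 2 + 1 := by
  simp [octic, map_ofNat]

theorem taylor_one_octic :
    taylor 1 octic = (X ^ 8 + C 2 * (4 * X ^ 7 + 16 * X ^ 6 + 40 * X ^ 5 + 67 * X ^ 4
      + 76 * X ^ 3 + 58 * X ^ 2 + 28 * X + 7) : ℤ[X]).map (Int.castRingHom ℚ) := by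
  simp [octic, taylor_apply, C_ofNat]
  ring

theorem irreducible_octic : Irreducible octic := by
  rw [← MulEquiv.irreducible_iff (taylorEquiv (1 : ℚ)),
    show taylorEquiv 1 octic = taylor 1 octic from rfl, taylor_one_octic,
    ← IsPrimitive.Int.irreducible_iff_irreducible_map_cast
      (monic_X_pow_add (by compute_degree!)).isPrimitive]
  exact irreducible_X_pow_add_C_mul Int.prime_two (by compute_degree!) (by simp)

theorem pow_eq_one_of_aeval_eq_zero {K L : Type*} [Field K] [Field L] [Algebra K L] {p : K[X]}
    (hp : Irreducible p) {z w : L} (hz : aeval z p = 0) (hw : aeval w p = 0) {m : ℕ}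
    (hzm : z ^ m = 1) : w ^ m = 1 := by
  have hmin : minpoly K w = minpoly K z := by
    rw [← minpoly.eq_of_irreducible hp hz, ← minpoly.eq_of_irreducible hp hw]
  have hdvd : minpoly K w ∣ X ^ m - 1 := hmin ▸ minpoly.dvd K z (by simp [hzm])
  simpa [sub_eq_zero] using aeval_eq_zero_of_dvd_aeval_eq_zero hdvd (minpoly.aeval K w)

-- `f` below is `P(i·a)`; it changes sign on `[1, 2]` since `f 1 = -2` and `f 2 = 49`.
theorem exists_aeval_octic_eq_zero_one_lt_norm : ∃ w : ℂ, aeval w octic = 0 ∧ 1 < ‖w‖ := by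
  let f : ℝ → ℝ := fun a ↦ a ^ 8 - 4 * a ^ 6 + 4 * a ^ 4 - 4 * a ^ 2 + 1
  obtain ⟨a, ⟨ha1, -⟩, ha⟩ : ∃ a ∈ Set.Ioo (1 : ℝ) 2, f a = 0 :=
    intermediate_value_Ioo (by norm_num) (by fun_prop) (by norm_num [f])
  refine ⟨a * Complex.I, ?_, ?_⟩
  · have hI : ((a : ℂ) * Complex.I) ^ 2 = -(a : ℂ) ^ 2 := by rw [mul_pow, Complex.I_sq]; ring
    calc aeval ((a : ℂ) * Complex.I) octic
        = (((a : ℂ) * Complex.I) ^ 2) ^ 4 + 4 * (((a : ℂ) * Complex.I) ^ 2) ^ 3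
          + 4 * (((a : ℂ) * Complex.I) ^ 2) ^ 2 + 4 * ((a : ℂ) * Complex.I) ^ 2 + 1 := by
          rw [aeval_octic]; ring
      _ = (f a : ℂ) := by rw [hI]; push_cast [f]; ring
      _ = 0 := by rw [ha, Complex.ofReal_zero]
  · rw [norm_mul, Complex.norm_I, mul_one, Complex.norm_real, Real.norm_of_nonneg (by linarith)]
    exact ha1

theorem aeval_octic_eq_zero_pow_ne_one {z : ℂ} (hz : aeval z octic = 0) {m : ℕ} (hm : m ≠ 0) :
    z ^ m ≠ 1 := by
  intro hzm
  obtain ⟨w, hw, hw1⟩ := exists_aeval_octic_eq_zero_one_lt_norm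
  exact hw1.ne' (Complex.norm_eq_one_of_pow_eq_one
    (pow_eq_one_of_aeval_eq_zero irreducible_octic hz hw hzm) hm)

theorem octic_eq_pow_four_mul {K : Type*} [Field K] {z : K} (hz : z ≠ 0) :
    z ^ 8 + 4 * z ^ 6 + 4 * z ^ 4 + 4 * z ^ 2 + 1 = z ^ 4 * ((z + z⁻¹) ^ 4 - 2) := by
  field_simp
  ring

theorem exp_rat_mul_pi_mul_I_pow (q : ℚ) :
    Complex.exp (q * Real.pi * Complex.I) ^ (2 * q.den) = 1 := by
  rw [← Complex.exp_nat_mul, ← Complex.exp_int_mul_two_pi_mul_I q.num]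
  congr 1
  have : (q : ℂ) * q.den = q.num := by exact_mod_cast Rat.mul_den_eq_num q
  push_cast
  linear_combination 2 * Real.pi * Complex.I * this

/-- `z⁸ + 4z⁶ + 4z⁴ + 4z² + 1` is irreducible over `ℚ`, none of its complex
roots is a root of unity, and consequently if `θ ∈ (0, π)` satisfies `2cos θ = 2^{1/4}`
then `θ/π` is irrational. -/
theorem octic_no_root_of_unity :
    Irreducible (X ^ 8 + C (4:ℚ) * X ^ 6 + C 4 * X ^ 4 + C 4 * X ^ 2 + 1 : Polynomial ℚ) ∧
    (∀ z : ℂ, z ^ 8 + 4 * z ^ 6 + 4 * z ^ 4 + 4 * z ^ 2 + 1 = 0 →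
      ¬ ∃ m : ℕ, 1 ≤ m ∧ z ^ m = 1) ∧
    (∀ θ : ℝ, θ ∈ Set.Ioo (0 : ℝ) Real.pi → 2 * Real.cos θ = (2 : ℝ) ^ ((1 : ℝ) / 4) →
      Irrational (θ / Real.pi)) := by
  have no_root_of_unity (z : ℂ) (hz : z ^ 8 + 4 * z ^ 6 + 4 * z ^ 4 + 4 * z ^ 2 + 1 = 0) :
      ¬ ∃ m : ℕ, 1 ≤ m ∧ z ^ m = 1 := by
    rintro ⟨m, hm, hzm⟩
    exact aeval_octic_eq_zero_pow_ne_one (by rwa [aeval_octic]) (by omega) hzm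
  refine ⟨irreducible_octic, no_root_of_unity, fun θ _ hcos ⟨q, hq⟩ ↦ ?_⟩
  have hθ : θ = q * Real.pi := by rw [hq, div_mul_cancel₀ _ Real.pi_ne_zero]
  set z := Complex.exp (θ * Complex.I)
  have hsum : z + z⁻¹ = ((2 : ℝ) ^ ((1 : ℝ) / 4) : ℝ) := by
    rw [← hcos, Complex.ofReal_mul, Complex.ofReal_cos, Complex.ofReal_ofNat, Complex.two_cos,
      neg_mul, Complex.exp_neg]
  refine no_root_of_unity z ?_ ⟨2 * q.den, by have := q.den_pos; omega, ?_⟩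
  · rw [octic_eq_pow_four_mul (Complex.exp_ne_zero _), hsum, ← Complex.ofReal_pow,
      ← Real.rpow_natCast, ← Real.rpow_mul zero_le_two]
    norm_num
  · simpa [z, hθ] using exp_rat_mul_pi_mul_I_pow q
end

section
/- The polynomial x⁴ + 3x³ + 3x² + x − 1 has exactly one real root α₀ in the open interval (0, 1). Moreover, for 0 < a < 1 and b = (3a² − 3 + √(a⁴ − 2a² + 9)) / (2a(a² − 2)), let A₊ = [[a, −1], [1, 0]], A₋ = [[b, −1], [1, 0]] and M₁ = A₋·A₊·A₊·A₋. Then the trace of M₁ equals (a² − 1)(b² − 1) − 2ab + 1, and it satisfies: 0 < tr(M₁) < 2 when 0 < a < α₀; tr(M₁) = 2 when a = α₀; and tr(M₁) > 2 when α₀ < a < 1. -/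
private lemma quartic_mono : ∀ x y : ℝ, 0 ≤ x → x < y →
    x ^ 4 + 3 * x ^ 3 + 3 * x ^ 2 + x - 1 < y ^ 4 + 3 * y ^ 3 + 3 * y ^ 2 + y - 1 := by
  intro x y hx hxy
  have hy : (0:ℝ) < y := lt_of_le_of_lt hx hxy
  have hfac : (0:ℝ) < (y^3 + y^2*x + y*x^2 + x^3) + 3*(y^2 + y*x + x^2) + 3*(y + x) + 1 := by
    nlinarith [pow_pos hy 3, mul_nonneg (mul_nonneg hy.le hy.le) hx,
      mul_nonneg (mul_nonneg hy.le hx) hx, mul_nonneg (mul_nonneg hx hx) hx,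
      mul_pos hy hy, mul_nonneg hy.le hx, mul_nonneg hx hx]
  nlinarith [mul_pos (sub_pos.mpr hxy) hfac]

private lemma aux_pos (p u : ℝ) (hu : 0 < u) (h : p ^ 2 < u ^ 2) : 0 < p + u := by nlinarith

private lemma aux_neg (p u : ℝ) (hu : 0 < u) (hp : p < 0) (h : u ^ 2 < p ^ 2) : p + u < 0 := by
  nlinarith

private lemma aux_eq (p u : ℝ) (hu : 0 < u) (hp : p < 0) (h : u ^ 2 = p ^ 2) : p + u = 0 := by
  have h2 : (p + u) * (u - p) = 0 := by linear_combination h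
  rcases mul_eq_zero.mp h2 with h3 | h3
  · exact h3
  · linarith

private lemma aux_td_lt (t d x : ℝ) (h : t * d = x) (hd : 0 < d) (hx : x < 0) : t < 0 := by
  nlinarith

private lemma aux_td_gt (t d x : ℝ) (h : t * d = x) (hd : 0 < d) (hx : 0 < x) : 0 < t := by
  nlinarith

private lemma aux_td_eq (t d x : ℝ) (h : t * d = x) (hd : 0 < d) (hx : x = 0) : t = 0 := by
  rcases mul_eq_zero.mp (h.trans hx) with h3 | h3
  · exact h3
  · exact absurd h3 (ne_of_gt hd)

set_option maxHeartbeats 1000000 in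
/-- the quartic `x⁴ + 3x³ + 3x² + x − 1` has a unique root `α₀` in `(0,1)`;
for `0 < a < 1` and `b = (3a² − 3 + √(a⁴ − 2a² + 9))/(2a(a² − 2))`, the trace of
`M₁ = A₋·A₊·A₊·A₋` equals `(a² − 1)(b² − 1) − 2ab + 1` and is `< 2`, `= 2`, `> 2`
according as `a < α₀`, `a = α₀`, `α₀ < a` (being positive in the first case). -/
theorem trace_trichotomy :
    ∃ α₀ : ℝ, (α₀ ∈ Set.Ioo (0 : ℝ) 1 ∧
      α₀ ^ 4 + 3 * α₀ ^ 3 + 3 * α₀ ^ 2 + α₀ - 1 = 0 ∧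
      ∀ x ∈ Set.Ioo (0 : ℝ) 1, x ^ 4 + 3 * x ^ 3 + 3 * x ^ 2 + x - 1 = 0 → x = α₀) ∧
    ∀ a : ℝ, 0 < a → a < 1 →
      ∀ b : ℝ,
        b = (3 * a ^ 2 - 3 + Real.sqrt (a ^ 4 - 2 * a ^ 2 + 9)) / (2 * a * (a ^ 2 - 2)) →
        ∀ M₁ : Matrix (Fin 2) (Fin 2) ℝ,
          M₁ = !![b, -1; 1, 0] * !![a, -1; 1, 0] * !![a, -1; 1, 0] * !![b, -1; 1, 0] →
          Matrix.trace M₁ = (a ^ 2 - 1) * (b ^ 2 - 1) - 2 * a * b + 1 ∧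
          (a < α₀ → 0 < Matrix.trace M₁ ∧ Matrix.trace M₁ < 2) ∧
          (a = α₀ → Matrix.trace M₁ = 2) ∧
          (α₀ < a → 2 < Matrix.trace M₁) := by
  obtain ⟨α, hαmem, hαroot⟩ :
      ∃ α ∈ Set.Ioo (0:ℝ) 1, α ^ 4 + 3 * α ^ 3 + 3 * α ^ 2 + α - 1 = 0 := by
    have hc : ContinuousOn (fun x : ℝ => x ^ 4 + 3 * x ^ 3 + 3 * x ^ 2 + x - 1)
        (Set.Icc (0:ℝ) 1) := (by continuity : Continuous _).continuousOn
    have hiv := intermediate_value_Ioo (by norm_num : (0:ℝ) ≤ 1) hc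
    have h0 : (0:ℝ) ∈ Set.Ioo ((fun x : ℝ => x ^ 4 + 3 * x ^ 3 + 3 * x ^ 2 + x - 1) 0)
        ((fun x : ℝ => x ^ 4 + 3 * x ^ 3 + 3 * x ^ 2 + x - 1) 1) := by norm_num
    obtain ⟨α, hm, hr⟩ := hiv h0
    exact ⟨α, hm, hr⟩
  refine ⟨α, ⟨hαmem, hαroot, ?_⟩, ?_⟩
  · intro x hx hxr
    rcases lt_trichotomy x α with h | h | h
    · exact absurd (quartic_mono x α hx.1.le h) (by rw [hxr, hαroot]; exact lt_irrefl 0)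
    · exact h
    · exact absurd (quartic_mono α x hαmem.1.le h) (by rw [hxr, hαroot]; exact lt_irrefl 0)
  · intro a ha0 ha1 b hb M₁ hM
    have htr : Matrix.trace (!![b, -1; 1, 0] * !![a, -1; 1, 0] * !![a, -1; 1, 0] * !![b, -1; 1, 0])
        = (a ^ 2 - 1) * (b ^ 2 - 1) - 2 * a * b + 1 := by
      simp [Matrix.mul_fin_two, Matrix.trace_fin_two_of]
      ring
    rw [hM, htr]
    set s := Real.sqrt (a ^ 4 - 2 * a ^ 2 + 9) with hsdef
    have hR : (0:ℝ) < a ^ 4 - 2 * a ^ 2 + 9 := by nlinarith [sq_nonneg (a ^ 2 - 1)]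
    have hs2 : s ^ 2 = a ^ 4 - 2 * a ^ 2 + 9 := Real.sq_sqrt hR.le
    have hs0 : 0 < s := Real.sqrt_pos.mpr hR
    have ha2 : a ^ 2 - 2 ≠ 0 := by nlinarith
    have haz : a ≠ 0 := ne_of_gt ha0
    have hb' : 2 * a * (a ^ 2 - 2) * b = 3 * a ^ 2 - 3 + s := by
      rw [hb]; field_simp
    set T : ℝ := (a ^ 2 - 1) * (b ^ 2 - 1) - 2 * a * b + 1 with hT
    have hD2 : (0:ℝ) < (2 * a * (a ^ 2 - 2)) ^ 2 := by positivity
    have key : (T - 2) * (2 * a * (a ^ 2 - 2)) ^ 2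
        = (-4*a^8 + 14*a^6 - 10*a^4 + 14*a^2 - 18) + (2*a^4 - 4*a^2 + 6) * s := by
      rw [hT]
      linear_combination ((a^2 - 1) * (2*a*(a^2-2)*b + (3*a^2 - 3 + s)) - 2*a*(2*a*(a^2-2))) * hb'
        + (a^2 - 1) * hs2
    have key0 : T * (2 * a * (a ^ 2 - 2)) ^ 2
        = (-4*a^8 + 22*a^6 - 42*a^4 + 46*a^2 - 18) + (2*a^4 - 4*a^2 + 6) * s := by
      linear_combination key
    have hQ : (0:ℝ) < 2*a^4 - 4*a^2 + 6 := by nlinarith [sq_nonneg (a^2 - 1)]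
    have hP : (-4*a^8 + 14*a^6 - 10*a^4 + 14*a^2 - 18 : ℝ) < 0 := by
      nlinarith [sq_nonneg a, sq_nonneg (a^2), sq_nonneg (a^2 - 1), pow_pos ha0 2, pow_pos ha0 4]
    have hQs : 0 < (2*a^4 - 4*a^2 + 6) * s := mul_pos hQ hs0
    have hmq : (0:ℝ) < -(a^4 - 3*a^3 + 3*a^2 - a - 1) := by
      nlinarith [mul_pos ha0 (pow_pos (by linarith : (0:ℝ) < 1 - a) 3)]
    have hfac : (0:ℝ) < 16*a^4*(a^2-2)^2 * (-(a^4 - 3*a^3 + 3*a^2 - a - 1)) := by positivity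
    have hsq : ((2*a^4 - 4*a^2 + 6) * s) ^ 2 - (-4*a^8 + 14*a^6 - 10*a^4 + 14*a^2 - 18) ^ 2
        = (16*a^4*(a^2-2)^2 * (-(a^4 - 3*a^3 + 3*a^2 - a - 1)))
          * (a ^ 4 + 3 * a ^ 3 + 3 * a ^ 2 + a - 1) := by
      linear_combination (2*a^4 - 4*a^2 + 6)^2 * hs2
    refine ⟨rfl, ?_, ?_, ?_⟩
    · intro haα
      have hqa : a ^ 4 + 3 * a ^ 3 + 3 * a ^ 2 + a - 1 < 0 := by
        have := quartic_mono a α ha0.le haα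
        linarith [hαroot]
      constructor
      · -- 0 < T
        have ha25 : a < 2/5 := by nlinarith
        have hid : ((2*a^4 - 4*a^2 + 6) * s) ^ 2 - (-4*a^8 + 22*a^6 - 42*a^4 + 46*a^2 - 18) ^ 2
            = 16*a^2*(72 - 196*a^2 + 274*a^4 - 239*a^6 + 137*a^8 - 51*a^10 + 11*a^12 - a^14) := by
          linear_combination (2*a^4 - 4*a^2 + 6)^2 * hs2
        have he : (0:ℝ) < 72 - 196*a^2 + 274*a^4 - 239*a^6 + 137*a^8 - 51*a^10 + 11*a^12 - a^14 := by
          have h2 : a^2 < 4/25 := by nlinarith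
          nlinarith [mul_nonneg (pow_nonneg ha0.le 4) (by nlinarith : (0:ℝ) ≤ 274 - 239*a^2),
            mul_nonneg (pow_nonneg ha0.le 8) (by nlinarith : (0:ℝ) ≤ 137 - 51*a^2),
            mul_nonneg (pow_nonneg ha0.le 12) (by nlinarith : (0:ℝ) ≤ 11 - a^2)]
        have h16 : (0:ℝ) < 16*a^2*(72 - 196*a^2 + 274*a^4 - 239*a^6 + 137*a^8 - 51*a^10 + 11*a^12 - a^14) := by
          have : (0:ℝ) < 16*a^2 := by positivity
          exact mul_pos this he
        have hgt0 : (-4*a^8 + 22*a^6 - 42*a^4 + 46*a^2 - 18) ^ 2 < ((2*a^4 - 4*a^2 + 6) * s) ^ 2 := by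
          linarith
        have hpos := aux_pos _ _ hQs hgt0
        exact aux_td_gt _ _ _ key0 hD2 hpos
      · -- T < 2
        have hFq : (16*a^4*(a^2-2)^2 * (-(a^4 - 3*a^3 + 3*a^2 - a - 1)))
            * (a ^ 4 + 3 * a ^ 3 + 3 * a ^ 2 + a - 1) < 0 :=
          mul_neg_of_pos_of_neg hfac hqa
        have hlt : ((2*a^4 - 4*a^2 + 6) * s) ^ 2
            < (-4*a^8 + 14*a^6 - 10*a^4 + 14*a^2 - 18) ^ 2 := by linarith
        have hneg := aux_neg _ _ hQs hP hlt
        have := aux_td_lt _ _ _ key hD2 hneg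
        linarith
    · intro haα
      subst haα
      have hFq : (16*a^4*(a^2-2)^2 * (-(a^4 - 3*a^3 + 3*a^2 - a - 1)))
          * (a ^ 4 + 3 * a ^ 3 + 3 * a ^ 2 + a - 1) = 0 := by rw [hαroot, mul_zero]
      have heq : ((2*a^4 - 4*a^2 + 6) * s) ^ 2
          = (-4*a^8 + 14*a^6 - 10*a^4 + 14*a^2 - 18) ^ 2 := by linarith
      have hz := aux_eq _ _ hQs hP heq
      have := aux_td_eq _ _ _ key hD2 hz
      linarith
    · intro haα
      have hqa : 0 < a ^ 4 + 3 * a ^ 3 + 3 * a ^ 2 + a - 1 := by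
        have := quartic_mono α a hαmem.1.le haα
        linarith [hαroot]
      have hFq : 0 < (16*a^4*(a^2-2)^2 * (-(a^4 - 3*a^3 + 3*a^2 - a - 1)))
          * (a ^ 4 + 3 * a ^ 3 + 3 * a ^ 2 + a - 1) := mul_pos hfac hqa
      have hgt : (-4*a^8 + 14*a^6 - 10*a^4 + 14*a^2 - 18) ^ 2
          < ((2*a^4 - 4*a^2 + 6) * s) ^ 2 := by linarith
      have hpos := aux_pos _ _ hQs hgt
      have := aux_td_gt _ _ _ key hD2 hpos
      linarith
end

section
/- Let α₀ be the unique real root of the polynomial x⁴ + 3x³ + 3x² + x − 1 in the interval (0, 1). Then the number (2α₀² + 1)/(9α₀² + 4) is irrational. -/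
/-- if `α₀` is the (unique) root of `x⁴ + 3x³ + 3x² + x − 1` in `(0,1)`,
then `(2α₀² + 1)/(9α₀² + 4)` is irrational. -/
theorem rotation_number_irrational_at_critical_value (α₀ : ℝ)
    (h0 : α₀ ∈ Set.Ioo (0 : ℝ) 1)
    (hroot : α₀ ^ 4 + 3 * α₀ ^ 3 + 3 * α₀ ^ 2 + α₀ - 1 = 0) :
    Irrational ((2 * α₀ ^ 2 + 1) / (9 * α₀ ^ 2 + 4)) := by
  obtain ⟨ha0, ha1⟩ := h0
  rintro ⟨q, hq⟩
  have hd : (0:ℝ) < 9 * α₀ ^ 2 + 4 := by nlinarith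
  rw [eq_div_iff hd.ne'] at hq
  -- q ≠ 2/9
  have h29 : (2 - 9 * q : ℚ) ≠ 0 := by
    intro h
    have h' : (2 : ℝ) - 9 * (q : ℝ) = 0 := by exact_mod_cast congrArg (Rat.cast : ℚ → ℝ) h
    nlinarith
  have h29' : (2 - 9 * (q:ℝ)) ≠ 0 := by exact_mod_cast h29
  set r : ℚ := (4 * q - 1) / (2 - 9 * q) with hrdef
  have hr : (r : ℝ) = α₀ ^ 2 := by
    rw [hrdef]
    push_cast
    rw [div_eq_iff h29']
    nlinarith
  have h3r : (3 * r + 1 : ℚ) ≠ 0 := by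
    intro h
    have h' : 3 * (r : ℝ) + 1 = 0 := by exact_mod_cast congrArg (Rat.cast : ℚ → ℝ) h
    rw [hr] at h'
    nlinarith
  set s : ℚ := (1 - 3 * r - r ^ 2) / (3 * r + 1) with hsdef
  have hs : (s : ℝ) = α₀ := by
    rw [hsdef]
    push_cast
    rw [div_eq_iff (by exact_mod_cast h3r : (3 * (r:ℝ) + 1) ≠ 0)]
    rw [hr]
    nlinarith
  have hsq : s ^ 4 + 3 * s ^ 3 + 3 * s ^ 2 + s - 1 = 0 := by
    have : ((s:ℝ)) ^ 4 + 3 * (s:ℝ) ^ 3 + 3 * (s:ℝ) ^ 2 + (s:ℝ) - 1 = 0 := by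
      rw [hs]; exact hroot
    exact_mod_cast this
  have hs0 : 0 < s := by
    have : (0:ℝ) < (s:ℝ) := by rw [hs]; exact ha0
    exact_mod_cast this
  have hs1 : s < 1 := by
    have : (s:ℝ) < 1 := by rw [hs]; exact ha1
    exact_mod_cast this
  -- now s is a rational root of a monic integer quartic; derive contradiction
  set n : ℤ := s.num with hn
  set d : ℤ := (s.den : ℤ) with hdd
  have hd0 : d ≠ 0 := by
    rw [hdd]
    exact_mod_cast s.den_nz
  have hdq : ((d:ℚ)) ≠ 0 := Int.cast_ne_zero.mpr hd0
  have hnq : (n : ℚ) = s * d := by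
    rw [hn, hdd]
    push_cast
    rw [Rat.mul_den_eq_num]
  have key : (n:ℚ) ^ 4 + 3 * n ^ 3 * d + 3 * n ^ 2 * d ^ 2 + n * d ^ 3 - d ^ 4 = 0 := by
    rw [hnq]
    linear_combination (d:ℚ) ^ 4 * hsq
  have hint : n ^ 4 + 3 * n ^ 3 * d + 3 * n ^ 2 * d ^ 2 + n * d ^ 3 - d ^ 4 = 0 := by
    exact_mod_cast key
  have hdvd : d ∣ n ^ 4 := ⟨-(3 * n ^ 3 + 3 * n ^ 2 * d + n * d ^ 2 - d ^ 3), by linear_combination hint⟩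
  have hdvd' : s.den ∣ n.natAbs ^ 4 := by
    have := Int.natAbs_dvd_natAbs.mpr hdvd
    simpa [hdd, Int.natAbs_pow] using this
  have hcop : Nat.Coprime s.den (n.natAbs ^ 4) := (s.reduced.symm).pow_right 4
  have hden1 : s.den = 1 := Nat.eq_one_of_dvd_one (hcop ▸ Nat.dvd_gcd dvd_rfl hdvd')
  have hsn : s = (n : ℚ) := by
    conv_lhs => rw [← Rat.num_div_den s]
    rw [hden1, ← hn]
    simp
  rw [hsn] at hs0 hs1
  have h1 : (0:ℤ) < n := by exact_mod_cast hs0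
  have h2 : n < 1 := by exact_mod_cast hs1
  omega
end
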